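/- arXiv:2309.14924 — 2 statements merged into one kernel-verified Lean document; each statement's English description precedes it below -/
import Mathlib

section
/- Let n ≥ 1 students have transformed distances g_1, …, g_n ∈ ℝ that are not all equal, and let ρ̄ ∈ [0,1] be the school's observed average ridership. Set d̄ = (1/n)·Σ_i g_i, m = min_i g_i, M = max_i g_i, ρ̂₁* = min( ρ̄/(d̄ − m), (1 − ρ̄)/(M − d̄) ) and ρ̂₀* = ρ̄ − ρ̂₁*·d̄. Then the pair (ρ̂₀*, ρ̂₁*) is feasible for the ridership-estimation problem — i.e. ρ̂₁* ≥ 0, 0 ≤ ρ̂₀* + ρ̂₁*·g_i ≤ 1 for every i, and (1/n)·Σ_i (ρ̂₀* + ρ̂₁*·g_i) = ρ̄ — and for every feasible pair (ρ̂₀, ρ̂₁) (meaning ρ̂₁ ≥ 0, 0 ≤ ρ̂₀ + ρ̂₁·g_i ≤ 1 for all i, and (1/n)·Σ_i (ρ̂₀ + ρ̂₁·g_i) = ρ̄) one has ρ̂₁ ≤ ρ̂₁*. Hence (ρ̂₀*, ρ̂₁*) maximizes ρ̂₁ over all feasible pairs. -/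
/-- Proposition 2 (full): the pair (ρ̂₀*, ρ̂₁*) is feasible for the
ridership-estimation problem and maximizes the slope ρ̂₁ over all feasible pairs. -/
theorem ridership_optimal_solution
    (n : ℕ) (hn : 1 ≤ n) (g : Fin n → ℝ) (hne : ∃ i j, g i ≠ g j)
    (ρbar : ℝ) (hρ0 : 0 ≤ ρbar) (hρ1 : ρbar ≤ 1)
    (dbar m M ρ1star ρ0star : ℝ)
    (hdbar : dbar = (1 / (n : ℝ)) * ∑ i, g i)
    (hm : m = Finset.univ.inf' ⟨⟨0, hn⟩, Finset.mem_univ _⟩ g)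
    (hM : M = Finset.univ.sup' ⟨⟨0, hn⟩, Finset.mem_univ _⟩ g)
    (hρ1star : ρ1star = min (ρbar / (dbar - m)) ((1 - ρbar) / (M - dbar)))
    (hρ0star : ρ0star = ρbar - ρ1star * dbar) :
    (0 ≤ ρ1star ∧
      (∀ i, 0 ≤ ρ0star + ρ1star * g i ∧ ρ0star + ρ1star * g i ≤ 1) ∧
      (1 / (n : ℝ)) * ∑ i, (ρ0star + ρ1star * g i) = ρbar) ∧
    (∀ ρ0 ρ1 : ℝ, 0 ≤ ρ1 →
      (∀ i, 0 ≤ ρ0 + ρ1 * g i ∧ ρ0 + ρ1 * g i ≤ 1) →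
      (1 / (n : ℝ)) * ∑ i, (ρ0 + ρ1 * g i) = ρbar →
      ρ1 ≤ ρ1star) := by
  have hn0 : (0:ℝ) < (n:ℝ) := by exact_mod_cast hn
  have hmle : ∀ i, m ≤ g i := by
    intro i; rw [hm]; exact Finset.inf'_le _ (Finset.mem_univ i)
  have hMge : ∀ i, g i ≤ M := by
    intro i; rw [hM]; exact Finset.le_sup' _ (Finset.mem_univ i)
  obtain ⟨i0, -, hi0⟩ := Finset.exists_mem_eq_inf' (⟨⟨0, hn⟩, Finset.mem_univ _⟩ :
    (Finset.univ : Finset (Fin n)).Nonempty) g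
  obtain ⟨iM, -, hiM⟩ := Finset.exists_mem_eq_sup' (⟨⟨0, hn⟩, Finset.mem_univ _⟩ :
    (Finset.univ : Finset (Fin n)).Nonempty) g
  rw [← hm] at hi0
  rw [← hM] at hiM
  have hmM : m < M := by
    obtain ⟨i, j, hij⟩ := hne
    rcases lt_or_ge m M with h | h
    · exact h
    · have hall : ∀ k, g k = m := fun k =>
        le_antisymm (le_trans (hMge k) h) (hmle k)
      exact absurd ((hall i).trans (hall j).symm) hij
  -- strict inequalities m < dbar < M
  have hsum_lt : (∑ _i : Fin n, m) < ∑ i, g i := by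
    apply Finset.sum_lt_sum (fun i _ => hmle i)
    exact ⟨iM, Finset.mem_univ _, by rw [← hiM]; exact hmM⟩
  have hsum_lt' : (∑ i, g i) < ∑ _i : Fin n, M := by
    apply Finset.sum_lt_sum (fun i _ => hMge i)
    exact ⟨i0, Finset.mem_univ _, by rw [← hi0]; exact hmM⟩
  have hconst : ∀ c : ℝ, (∑ _i : Fin n, c) = (n:ℝ) * c := by
    intro c; simp [Finset.sum_const, mul_comm]
  have hdm : 0 < dbar - m := by
    rw [hdbar]
    have := hsum_lt
    rw [hconst] at this
    rw [sub_pos]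
    calc m = (1/(n:ℝ)) * ((n:ℝ) * m) := by field_simp
      _ < (1/(n:ℝ)) * ∑ i, g i := by
          apply mul_lt_mul_of_pos_left this (by positivity)
  have hMd : 0 < M - dbar := by
    rw [hdbar]
    have := hsum_lt'
    rw [hconst] at this
    rw [sub_pos]
    calc (1/(n:ℝ)) * ∑ i, g i < (1/(n:ℝ)) * ((n:ℝ) * M) := by
          apply mul_lt_mul_of_pos_left this (by positivity)
      _ = M := by field_simp
  have key : ∀ a b : ℝ, (1 / (n : ℝ)) * ∑ i, (a + b * g i) = a + b * dbar := by
    intro a b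
    rw [hdbar, Finset.sum_add_distrib, Finset.sum_const, Finset.card_univ,
      Fintype.card_fin, nsmul_eq_mul, ← Finset.mul_sum]
    field_simp
  have h1s : 0 ≤ ρ1star := by
    rw [hρ1star]
    exact le_min (div_nonneg hρ0 hdm.le) (div_nonneg (by linarith) hMd.le)
  have hA : ρ1star * (dbar - m) ≤ ρbar := by
    have := min_le_left (ρbar / (dbar - m)) ((1 - ρbar) / (M - dbar))
    rw [← hρ1star] at this
    exact (le_div_iff₀ hdm).mp this
  have hB : ρ1star * (M - dbar) ≤ 1 - ρbar := by
    have := min_le_right (ρbar / (dbar - m)) ((1 - ρbar) / (M - dbar))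
    rw [← hρ1star] at this
    exact (le_div_iff₀ hMd).mp this
  refine ⟨⟨h1s, fun i => ?_, by rw [key]; rw [hρ0star]; ring⟩, ?_⟩
  · constructor
    · have h4 : 0 ≤ ρ1star * (g i - m) :=
        mul_nonneg h1s (by linarith [hmle i])
      rw [hρ0star]; nlinarith [hA, h4]
    · have h4 : 0 ≤ ρ1star * (M - g i) :=
        mul_nonneg h1s (by linarith [hMge i])
      rw [hρ0star]; nlinarith [hB, h4]
  · intro ρ0 ρ1 hρ1nn hbounds hsum
    rw [key] at hsum
    have hlow := (hbounds i0).1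
    have hhigh := (hbounds iM).2
    rw [← hi0] at hlow
    rw [← hiM] at hhigh
    rw [hρ1star]
    refine le_min ((le_div_iff₀ hdm).mpr ?_) ((le_div_iff₀ hMd).mpr ?_)
    · nlinarith
    · nlinarith
end

section
/- Let n ≥ 1 students have transformed distances g_1, …, g_n ∈ ℝ that are not all equal, and let ρ̄ ∈ [0,1]. Set d̄ = (1/n)·Σ_i g_i, m = min_i g_i, M = max_i g_i, ρ̂₁* = min( ρ̄/(d̄ − m), (1 − ρ̄)/(M − d̄) ) and ρ̂₀* = ρ̄ − ρ̂₁*·d̄. Then ρ̂₁* ≥ 0, 0 ≤ ρ̂₀* + ρ̂₁*·g_i ≤ 1 for every i, and (1/n)·Σ_i (ρ̂₀* + ρ̂₁*·g_i) = ρ̄; that is, (ρ̂₀*, ρ̂₁*) is feasible for the ridership-estimation problem. -/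
/-- Feasibility part of Proposition 2: the pair (ρ̂₀*, ρ̂₁*) is feasible
for the ridership-estimation problem. -/
theorem ridership_feasibility
    (n : ℕ) (hn : 1 ≤ n) (g : Fin n → ℝ) (hne : ∃ i j, g i ≠ g j)
    (ρbar : ℝ) (hρ0 : 0 ≤ ρbar) (hρ1 : ρbar ≤ 1)
    (dbar m M ρ1star ρ0star : ℝ)
    (hdbar : dbar = (1 / (n : ℝ)) * ∑ i, g i)
    (hm : m = Finset.univ.inf' ⟨⟨0, hn⟩, Finset.mem_univ _⟩ g)
    (hM : M = Finset.univ.sup' ⟨⟨0, hn⟩, Finset.mem_univ _⟩ g)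
    (hρ1star : ρ1star = min (ρbar / (dbar - m)) ((1 - ρbar) / (M - dbar)))
    (hρ0star : ρ0star = ρbar - ρ1star * dbar) :
    0 ≤ ρ1star ∧
      (∀ i, 0 ≤ ρ0star + ρ1star * g i ∧ ρ0star + ρ1star * g i ≤ 1) ∧
      (1 / (n : ℝ)) * ∑ i, (ρ0star + ρ1star * g i) = ρbar := by
  obtain ⟨i0, j0, hij⟩ := hne
  have hnpos : (0:ℝ) < n := by exact_mod_cast hn
  have hmle : ∀ i, m ≤ g i := fun i => hm ▸ Finset.inf'_le _ (Finset.mem_univ i)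
  have hMle : ∀ i, g i ≤ M := fun i => hM ▸ Finset.le_sup' _ (Finset.mem_univ i)
  have hmd : m < dbar := by
    have hex : ∃ k, m < g k := by
      by_contra h
      push_neg at h
      have h1 : g i0 = m := le_antisymm (h i0) (hmle i0)
      have h2 : g j0 = m := le_antisymm (h j0) (hmle j0)
      exact hij (h1.trans h2.symm)
    obtain ⟨k, hk⟩ := hex
    have hsum : (n:ℝ) * m < ∑ i, g i := by
      have := Finset.sum_lt_sum (fun i (_ : i ∈ Finset.univ) => hmle i)
        ⟨k, Finset.mem_univ k, hk⟩
      simpa [Finset.sum_const, Finset.card_univ, nsmul_eq_mul] using this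
    rw [hdbar]
    rw [show (1 / (n:ℝ)) * ∑ i, g i = (∑ i, g i) / n by ring, lt_div_iff₀ hnpos]
    linarith
  have hdM : dbar < M := by
    have hex : ∃ k, g k < M := by
      by_contra h
      push_neg at h
      have h1 : g i0 = M := le_antisymm (hMle i0) (h i0)
      have h2 : g j0 = M := le_antisymm (hMle j0) (h j0)
      exact hij (h1.trans h2.symm)
    obtain ⟨k, hk⟩ := hex
    have hsum : ∑ i, g i < (n:ℝ) * M := by
      have := Finset.sum_lt_sum (fun i (_ : i ∈ Finset.univ) => hMle i)
        ⟨k, Finset.mem_univ k, hk⟩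
      simpa [Finset.sum_const, Finset.card_univ, nsmul_eq_mul] using this
    rw [hdbar]
    rw [show (1 / (n:ℝ)) * ∑ i, g i = (∑ i, g i) / n by ring, div_lt_iff₀ hnpos]
    linarith
  have hd1 : 0 < dbar - m := by linarith
  have hd2 : 0 < M - dbar := by linarith
  have hρ1nn : 0 ≤ ρ1star := by
    rw [hρ1star]
    exact le_min (div_nonneg hρ0 hd1.le) (div_nonneg (by linarith) hd2.le)
  have h1' : ρ1star * (dbar - m) ≤ ρbar := by
    have h1 : ρ1star ≤ ρbar / (dbar - m) := hρ1star ▸ min_le_left _ _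
    calc ρ1star * (dbar - m) ≤ (ρbar / (dbar - m)) * (dbar - m) := by
          exact mul_le_mul_of_nonneg_right h1 hd1.le
      _ = ρbar := by field_simp
  have h2' : ρ1star * (M - dbar) ≤ 1 - ρbar := by
    have h2 : ρ1star ≤ (1 - ρbar) / (M - dbar) := hρ1star ▸ min_le_right _ _
    calc ρ1star * (M - dbar) ≤ ((1 - ρbar) / (M - dbar)) * (M - dbar) := by
          exact mul_le_mul_of_nonneg_right h2 hd2.le
      _ = 1 - ρbar := by field_simp
  refine ⟨hρ1nn, fun i => ?_, ?_⟩
  · have e1 := mul_le_mul_of_nonneg_left (hmle i) hρ1nn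
    have e2 := mul_le_mul_of_nonneg_left (hMle i) hρ1nn
    constructor
    · rw [hρ0star]; nlinarith
    · rw [hρ0star]; nlinarith
  · rw [Finset.sum_add_distrib, Finset.sum_const, Finset.card_univ, Fintype.card_fin,
      ← Finset.mul_sum, hρ0star, hdbar]
    have hne' : (n:ℝ) ≠ 0 := ne_of_gt hnpos
    rw [nsmul_eq_mul]
    field_simp
    ring
end
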